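/- arXiv:2107.14187 — 4 statements merged into one kernel-verified Lean document; each statement's English description precedes it below -/
import Mathlib

section
/- Let G be a countable amenable group acting almost freely and almost transitively by graph automorphisms on a countable, loopless, locally finite graph Γ, let U_0 be a fundamental domain of the action, and let λ: V(Γ) → ℝ_{>0} be a G-invariant activity function. Then for every Følner sequence {F_n} in G, lim_n (log Z_Γ(F_n U_0, λ))/|F_n| = inf_{F ∈ 𝓕(G)} (log Z_Γ(F U_0, λ))/|F|; in particular the limit exists. -/
/-!
STATEMENT 2:
Let `G` be a countable amenable group acting almost freely and almost
transitively by graph automorphisms on a countable, loopless, locally finite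
graph `Γ`, let `U₀` be a fundamental domain of the action, and let
`λ : V(Γ) → ℝ_{>0}` be a `G`-invariant activity function.  Then for every
Følner sequence `{Fₙ}` in `G`,
`limₙ (log Z_Γ(Fₙ U₀, λ))/|Fₙ| = inf_{F ∈ 𝓕(G)} (log Z_Γ(F U₀, λ))/|F|`;
in particular the limit exists.
-/

open scoped Classical symmDiff
open Filter

/-- The partition function `Z_Γ(U, λ)` of the hardcore model `(Γ, λ)` on the
finite set `U`: independent sets supported on `U` are identified with the
independent subsets `s ⊆ U`, with weight `∏_{v ∈ s} λ(v)`. -/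
noncomputable def hcZ {V : Type*} (Γ : SimpleGraph V) (lam : V → ℝ)
    (U : Finset V) : ℝ :=
  ∑ s ∈ U.powerset.filter (fun s => ∀ u ∈ s, ∀ w ∈ s, ¬ Γ.Adj u w),
    ∏ u ∈ s, lam u

/-- The translate `F • U₀ = {g • u : g ∈ F, u ∈ U₀}` as a finite set. -/
noncomputable def transl {G V : Type*} [Group G] [MulAction G V]
    (F : Finset G) (U₀ : Finset V) : Finset V :=
  (F ×ˢ U₀).image (fun p => p.1 • p.2)

/-- `{Fₙ}` is a (right) Følner sequence: finite nonempty sets with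
`|Fₙ g △ Fₙ|/|Fₙ| → 0` for every `g ∈ G`. -/
def IsFolnerSeq {G : Type*} [Group G] (F : ℕ → Finset G) : Prop :=
  (∀ n, (F n).Nonempty) ∧
    ∀ g : G, Tendsto
      (fun n => ((((F n).image (· * g)) ∆ (F n)).card : ℝ) / ((F n).card : ℝ))
      atTop (nhds 0)

/-- A finite set `U` is dynamically generating: `G • U = V`. -/
def Generating (G : Type*) {V : Type*} [Group G] [MulAction G V]
    (U : Finset V) : Prop :=
  ∀ v : V, ∃ g : G, ∃ u ∈ U, g • u = v

/-- A fundamental domain: a finite dynamically generating set that is minimal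
with this property. -/
def IsFundDom (G : Type*) {V : Type*} [Group G] [MulAction G V]
    (U : Finset V) : Prop :=
  Generating G U ∧ ∀ U' ⊆ U, Generating G U' → U' = U


/-!
Label each vertex of `A • U₀` by an element of `A`. For `g ∈ A * K⁻¹`, the vertices with label in
`g • K` lie in `(A ∩ g • K) • U₀`, and every vertex is covered by exactly `#K` of these sets, so
Shearer's inequality for the hardcore model together with the `G`-invariance of `Z` gives
`#K * log Z(A • U₀) ≤ #(A * K⁻¹) * log Z(K • U₀)`. Shearer's inequality itself follows from the
deletion recursion `Z(U) = Z(U - v) + λ(v) Z(U - N[v])` and a Hölder-type inequality. Along a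
Følner sequence `#(Fₙ * K⁻¹) / #Fₙ → 1`, so the normalised free energies are eventually below
`log Z(K • U₀) / #K + ε` for every `K`, and they are never below the infimum.
-/

open scoped Pointwise
open Finset

section HardcoreModel

variable {V : Type*} (Γ : SimpleGraph V) {lam : V → ℝ}

lemma one_le_hcZ (hlam : ∀ v, 0 ≤ lam v) (U : Finset V) : 1 ≤ hcZ Γ lam U := by
  have hempty : (∅ : Finset V) ∈ U.powerset.filter (fun s => ∀ u ∈ s, ∀ w ∈ s, ¬ Γ.Adj u w) := by
    simp
  simpa [hcZ] using single_le_sum (f := fun s => ∏ u ∈ s, lam u)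
    (fun s _ => prod_nonneg fun u _ => hlam u) hempty

lemma hcZ_pos (hlam : ∀ v, 0 ≤ lam v) (U : Finset V) : 0 < hcZ Γ lam U :=
  one_pos.trans_le (one_le_hcZ Γ hlam U)

lemma hcZ_mono (hlam : ∀ v, 0 ≤ lam v) {U U' : Finset V} (h : U ⊆ U') :
    hcZ Γ lam U ≤ hcZ Γ lam U' := by
  refine sum_le_sum_of_subset_of_nonneg (fun s hs => ?_) fun s _ _ => prod_nonneg fun u _ => hlam u
  simp only [mem_filter, mem_powerset] at hs ⊢
  exact ⟨hs.1.trans h, hs.2⟩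

lemma hcZ_eq_hcZ_erase_add {U : Finset V} {v : V} (hv : v ∈ U) :
    hcZ Γ lam U = hcZ Γ lam (U.erase v) + lam v * hcZ Γ lam {w ∈ U | w ≠ v ∧ ¬ Γ.Adj v w} := by
  rw [hcZ, ← sum_filter_not_add_sum_filter _ (fun s => v ∈ s)]
  congr 1
  · refine sum_congr (ext fun s => ?_) fun _ _ => rfl
    simp only [mem_filter, mem_powerset, subset_erase]
    tauto
  · rw [hcZ, mul_sum]
    refine sum_nbij' (·.erase v) (insert v) (fun s hs => ?_) (fun t ht => ?_)
      (fun s hs => insert_erase (mem_filter.1 hs).2) (fun t ht => erase_insert fun hvt => ?_)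
      (fun s hs => (mul_prod_erase s lam (mem_filter.1 hs).2).symm)
    · simp only [mem_filter, mem_powerset] at hs ⊢
      obtain ⟨⟨hsU, hind⟩, hvs⟩ := hs
      refine ⟨fun w hw => ?_, fun u hu w hw => hind u (mem_of_mem_erase hu) w (mem_of_mem_erase hw)⟩
      obtain ⟨hwv, hws⟩ := mem_erase.1 hw
      exact mem_filter.2 ⟨hsU hws, hwv, hind v hvs w hws⟩
    · simp only [mem_powerset, subset_iff, mem_filter] at ht ⊢
      obtain ⟨htU, hind⟩ := ht
      refine ⟨⟨forall_mem_insert _ _ _ |>.2 ⟨hv, fun w hw => (htU hw).1⟩, ?_⟩, mem_insert_self v t⟩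
      simp only [forall_mem_insert]
      refine ⟨⟨Γ.loopless.irrefl v, fun w hw => (htU hw).2.2⟩,
        fun u hu => ⟨fun h => (htU hu).2.2 h.symm, hind u hu⟩⟩
    · simp only [mem_filter, mem_powerset] at ht
      exact (mem_filter.1 (ht.1 hvt)).2.1 rfl

lemma hcZ_map_iso {W : Type*} {Γ' : SimpleGraph W} {lam' : W → ℝ} (e : Γ ≃g Γ')
    (he : ∀ v, lam' (e v) = lam v) (U : Finset V) :
    hcZ Γ' lam' (U.map e.toEquiv.toEmbedding) = hcZ Γ lam U := by
  symm
  refine sum_equiv (Equiv.finsetCongr e.toEquiv) (fun s => ?_) fun s _ => ?_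
  · simp only [mem_filter, mem_powerset, Equiv.finsetCongr_apply, map_subset_map, forall_mem_map]
    simp [e.map_adj_iff]
  · simp [Equiv.finsetCongr_apply, he]

end HardcoreModel

/-- AM-GM applied to the ratios `x / (x + y)` and `y / (x + y)`, summed. -/
theorem Real.geom_mean_weighted_add_le {ι : Type*} (s : Finset ι) (w x y : ι → ℝ)
    (hw : ∀ i ∈ s, 0 ≤ w i) (hw' : ∑ i ∈ s, w i = 1) (hx : ∀ i ∈ s, 0 < x i)
    (hy : ∀ i ∈ s, 0 < y i) :
    ∏ i ∈ s, x i ^ w i + ∏ i ∈ s, y i ^ w i ≤ ∏ i ∈ s, (x i + y i) ^ w i := by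
  have hxy : ∀ i ∈ s, 0 < x i + y i := fun i hi => add_pos (hx i hi) (hy i hi)
  have hratio : ∀ z : ι → ℝ, (∀ i ∈ s, 0 < z i) →
      ∏ i ∈ s, (z i / (x i + y i)) ^ w i = (∏ i ∈ s, z i ^ w i) / ∏ i ∈ s, (x i + y i) ^ w i :=
    fun z hz => by
      rw [← prod_div_distrib]
      exact prod_congr rfl fun i hi => Real.div_rpow (hz i hi).le (hxy i hi).le _
  have hamgm : ∀ z : ι → ℝ, (∀ i ∈ s, 0 < z i) →
      (∏ i ∈ s, z i ^ w i) / ∏ i ∈ s, (x i + y i) ^ w i ≤ ∑ i ∈ s, w i * (z i / (x i + y i)) :=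
    fun z hz => hratio z hz ▸ Real.geom_mean_le_arith_mean_weighted s w _ hw hw'
      fun i hi => (div_pos (hz i hi) (hxy i hi)).le
  have hsum : ∑ i ∈ s, w i * (x i / (x i + y i)) + ∑ i ∈ s, w i * (y i / (x i + y i)) = 1 := by
    rw [← sum_add_distrib, ← hw']
    refine sum_congr rfl fun i hi => ?_
    rw [← mul_add, ← add_div, div_self (hxy i hi).ne', mul_one]
  have hpos : 0 < ∏ i ∈ s, (x i + y i) ^ w i :=
    prod_pos fun i hi => Real.rpow_pos_of_pos (hxy i hi) _
  rw [← div_le_one hpos, add_div]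
  exact hsum ▸ add_le_add (hamgm x hx) (hamgm y hy)

lemma add_pow_card_le_prod_add_mul {ι : Type*} (s : Finset ι) {x y : ι → ℝ}
    (hx : ∀ i ∈ s, 0 < x i) (hy : ∀ i ∈ s, 0 < y i) {a b c : ℝ} (ha : 0 ≤ a) (hb : 0 ≤ b)
    (hc : 0 ≤ c) (hax : a ^ #s ≤ (∏ i ∈ s, x i) * c) (hby : b ^ #s ≤ (∏ i ∈ s, y i) * c) :
    (a + b) ^ #s ≤ (∏ i ∈ s, (x i + y i)) * c := by
  rcases s.eq_empty_or_nonempty with rfl | hs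
  · simpa using hax
  have hm : #s ≠ 0 := hs.card_pos.ne'
  set r : ℝ := (#s : ℝ)⁻¹
  have hw : ∑ _i ∈ s, r = 1 := by
    rw [sum_const, nsmul_eq_mul]
    exact mul_inv_cancel₀ (Nat.cast_ne_zero.2 hm)
  have hroot (d : ℝ) (z : ι → ℝ) (hd : 0 ≤ d) (hz : ∀ i ∈ s, 0 < z i)
      (h : d ^ #s ≤ (∏ i ∈ s, z i) * c) : d ≤ (∏ i ∈ s, z i ^ r) * c ^ r := by
    rw [Real.finsetProd_rpow s z fun i hi => (hz i hi).le,
      ← Real.mul_rpow (prod_nonneg fun i hi => (hz i hi).le) hc,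
      ← Real.pow_rpow_inv_natCast hd hm]
    exact Real.rpow_le_rpow (pow_nonneg hd _) h (by positivity)
  have hsum : a + b ≤ (∏ i ∈ s, (x i + y i) ^ r) * c ^ r :=
    calc a + b ≤ (∏ i ∈ s, x i ^ r + ∏ i ∈ s, y i ^ r) * c ^ r := by
          rw [add_mul]; exact add_le_add (hroot a x ha hx hax) (hroot b y hb hy hby)
      _ ≤ (∏ i ∈ s, (x i + y i) ^ r) * c ^ r := by
          gcongr
          exact Real.geom_mean_weighted_add_le s _ x y (fun _ _ => by positivity) hw hx hy
  have hxy : ∀ i ∈ s, 0 ≤ x i + y i := fun i hi => (add_pos (hx i hi) (hy i hi)).le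
  rw [Real.finsetProd_rpow s _ hxy, ← Real.mul_rpow (prod_nonneg hxy) hc] at hsum
  have := pow_le_pow_left₀ (add_nonneg ha hb) hsum #s
  rwa [Real.rpow_inv_natCast_pow (mul_nonneg (prod_nonneg hxy) hc) hm] at this

section Shearer

variable {V ι : Type*} (Γ : SimpleGraph V) {lam : V → ℝ}

/-- Shearer's inequality for the hardcore model. -/
theorem hcZ_pow_le_prod_of_card_filter_mem_eq (hlam : ∀ v, 0 < lam v) (I : Finset ι) {m : ℕ}
    (U : Finset V) (B : ι → Finset V) (hcov : ∀ v ∈ U, #{i ∈ I | v ∈ B i} = m) :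
    hcZ Γ lam U ^ m ≤ ∏ i ∈ I, hcZ Γ lam (B i) := by
  have hlam' : ∀ v, 0 ≤ lam v := fun v => (hlam v).le
  have hZ (W : Finset V) : 0 ≤ hcZ Γ lam W := (hcZ_pos Γ hlam' W).le
  induction U using Finset.strongInduction generalizing B with
  | H U ih =>
  rcases U.eq_empty_or_nonempty with rfl | ⟨v, hv⟩
  · calc hcZ Γ lam ∅ ^ m = 1 := by simp [hcZ, filter_singleton]
      _ ≤ ∏ i ∈ I, hcZ Γ lam (B i) := one_le_prod fun i _ => one_le_hcZ Γ hlam' _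
  set P : V → Prop := fun w => w ≠ v ∧ ¬ Γ.Adj v w
  have hsplit (C : ι → Finset V) : ∏ i ∈ I, hcZ Γ lam (C i) =
      (∏ i ∈ I with v ∈ B i, hcZ Γ lam (C i)) * ∏ i ∈ I with v ∉ B i, hcZ Γ lam (C i) :=
    (prod_filter_mul_prod_filter_not I _ _).symm
  set c := ∏ i ∈ I with v ∉ B i, hcZ Γ lam (B i)
  have herase : hcZ Γ lam (U.erase v) ^ m ≤
      (∏ i ∈ I with v ∈ B i, hcZ Γ lam ((B i).erase v)) * c := by
    refine (ih _ (erase_ssubset hv) (fun i => (B i).erase v) fun w hw => ?_).trans_eq ?_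
    · rw [← hcov w (mem_of_mem_erase hw)]
      congr 1
      exact filter_congr fun i _ => by simp [ne_of_mem_erase hw]
    · rw [hsplit]
      congr 1
      exact prod_congr rfl fun i hi => by rw [erase_eq_of_notMem (mem_filter.1 hi).2]
  have hfilter : (lam v * hcZ Γ lam (U.filter P)) ^ m ≤
      (∏ i ∈ I with v ∈ B i, lam v * hcZ Γ lam ((B i).filter P)) * c := by
    have hsub : U.filter P ⊂ U := filter_ssubset.2 ⟨v, hv, fun h => h.1 rfl⟩
    have hrec := ih _ hsub (fun i => (B i).filter P) fun w hw => by
      rw [← hcov w (mem_of_mem_filter w hw)]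
      congr 1
      exact filter_congr fun i _ => by simp [(mem_filter.1 hw).2]
    rw [prod_mul_distrib, prod_const, hcov v hv, mul_pow, mul_assoc]
    refine mul_le_mul_of_nonneg_left (hrec.trans ?_) (pow_nonneg (hlam' v) m)
    rw [hsplit]
    exact mul_le_mul_of_nonneg_left (prod_le_prod (fun i _ => hZ _)
      fun i _ => hcZ_mono Γ hlam' (filter_subset P (B i))) (prod_nonneg fun i _ => hZ _)
  calc hcZ Γ lam U ^ m = (hcZ Γ lam (U.erase v) + lam v * hcZ Γ lam (U.filter P)) ^ m := by
        rw [hcZ_eq_hcZ_erase_add Γ hv]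
    _ ≤ (∏ i ∈ I with v ∈ B i,
          (hcZ Γ lam ((B i).erase v) + lam v * hcZ Γ lam ((B i).filter P))) * c := by
        rw [← hcov v hv] at herase hfilter ⊢
        exact add_pow_card_le_prod_add_mul _ (fun i _ => hcZ_pos Γ hlam' _)
          (fun i _ => mul_pos (hlam v) (hcZ_pos Γ hlam' _)) (hZ _)
          (mul_nonneg (hlam' v) (hZ _)) (prod_nonneg fun i _ => hZ _) herase hfilter
    _ = ∏ i ∈ I, hcZ Γ lam (B i) := by
        rw [hsplit]
        congr 1
        exact prod_congr rfl fun i hi => (hcZ_eq_hcZ_erase_add Γ (mem_filter.1 hi).2).symm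

end Shearer

section GroupAction

variable {G V : Type*} [Group G] [MulAction G V] (Γ : SimpleGraph V) {lam : V → ℝ}

lemma hcZ_smul_finset (hact : ∀ (g : G) (u w : V), Γ.Adj (g • u) (g • w) ↔ Γ.Adj u w)
    (hinv : ∀ (g : G) (v : V), lam (g • v) = lam v) (g : G) (U : Finset V) :
    hcZ Γ lam (g • U) = hcZ Γ lam U := by
  let e : Γ ≃g Γ := ⟨MulAction.toPerm g, hact g _ _⟩
  rw [smul_finset_def, ← hcZ_map_iso Γ e (hinv g) U, map_eq_image]
  rfl

lemma hcZ_smul_pow_card_le (hlam : ∀ v, 0 < lam v) (A K : Finset G) (U₀ : Finset V) :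
    hcZ Γ lam (A • U₀) ^ #K ≤ ∏ g ∈ A * K⁻¹, hcZ Γ lam ((A ∩ g • K) • U₀) := by
  choose! π hπA hπ using fun v (hv : v ∈ A • U₀) => mem_smul.1 hv
  have hcov : ∀ v ∈ A • U₀, {g ∈ A * K⁻¹ | v ∈ {w ∈ A • U₀ | π w ∈ g • K}} = π v • K⁻¹ := by
    intro v hv
    ext g
    simp only [mem_filter, Finset.mem_mul, Finset.mem_inv, mem_smul_finset, smul_eq_mul]
    constructor
    · rintro ⟨-, -, k, hk, hgk⟩
      exact ⟨k⁻¹, ⟨k, hk, rfl⟩, by rw [← hgk, mul_inv_cancel_right]⟩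
    · rintro ⟨_, ⟨k, hk, rfl⟩, rfl⟩
      exact ⟨⟨π v, hπA v hv, k⁻¹, ⟨k, hk, rfl⟩, rfl⟩, hv, k, hk, inv_mul_cancel_right (π v) k⟩
  refine (hcZ_pow_le_prod_of_card_filter_mem_eq Γ hlam (A * K⁻¹) (A • U₀) _
    fun v hv => by rw [hcov v hv, card_smul_finset, card_inv]).trans
    (prod_le_prod (fun g _ => (hcZ_pos Γ (fun v => (hlam v).le) _).le) fun g _ =>
      hcZ_mono Γ (fun v => (hlam v).le) fun v hv => ?_)
  obtain ⟨hv, hπK⟩ := mem_filter.1 hv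
  obtain ⟨u, hu, hπu⟩ := hπ v hv
  exact mem_smul.2 ⟨π v, mem_inter.2 ⟨hπA v hv, hπK⟩, u, hu, hπu⟩

lemma card_mul_log_hcZ_smul_le (hact : ∀ (g : G) (u w : V), Γ.Adj (g • u) (g • w) ↔ Γ.Adj u w)
    (hlam : ∀ v, 0 < lam v) (hinv : ∀ (g : G) (v : V), lam (g • v) = lam v)
    (A K : Finset G) (U₀ : Finset V) :
    (#K : ℝ) * Real.log (hcZ Γ lam (A • U₀)) ≤ #(A * K⁻¹) * Real.log (hcZ Γ lam (K • U₀)) := by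
  have hlam' : ∀ v, 0 ≤ lam v := fun v => (hlam v).le
  have hpow : hcZ Γ lam (A • U₀) ^ #K ≤ hcZ Γ lam (K • U₀) ^ #(A * K⁻¹) :=
    (hcZ_smul_pow_card_le Γ hlam A K U₀).trans <|
      (prod_le_prod (fun g _ => (hcZ_pos Γ hlam' _).le) fun g _ =>
        (hcZ_mono Γ hlam' (smul_subset_smul_right inter_subset_right)).trans_eq <| by
          rw [smul_assoc, hcZ_smul_finset Γ hact hinv]).trans_eq (prod_const _)
  rw [← Real.log_pow, ← Real.log_pow]
  exact Real.log_le_log (pow_pos (hcZ_pos Γ hlam' _) _) hpow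

end GroupAction

lemma Finset.card_mul_le_card_add_sum_card_symmDiff {M : Type*} [Mul M] (A K : Finset M) :
    #(A * K) ≤ #A + ∑ k ∈ K, #(A.image (· * k) ∆ A) := by
  have hsub : A * K ⊆ A ∪ K.biUnion fun k => A.image (· * k) \ A := by
    intro x hx
    obtain ⟨a, ha, k, hk, rfl⟩ := Finset.mem_mul.1 hx
    by_cases hak : a * k ∈ A
    · exact mem_union_left _ hak
    · exact mem_union_right _ (mem_biUnion.2 ⟨k, hk, mem_sdiff.2 ⟨mem_image_of_mem _ ha, hak⟩⟩)
  calc #(A * K) ≤ #A + #(K.biUnion fun k => A.image (· * k) \ A) :=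
        (card_le_card hsub).trans (card_union_le _ _)
    _ ≤ #A + ∑ k ∈ K, #(A.image (· * k) ∆ A) := by
        gcongr
        refine card_biUnion_le.trans (sum_le_sum fun k _ => card_le_card ?_)
        rw [symmDiff_def]
        exact subset_union_left

namespace IsFolnerSeq

variable {G : Type*} [Group G] {F : ℕ → Finset G}

lemma tendsto_card_mul_div_card (hF : IsFolnerSeq F) {K : Finset G} (hK : K.Nonempty) :
    Tendsto (fun n => (#(F n * K) : ℝ) / #(F n)) atTop (nhds 1) := by
  have hcard (n : ℕ) : (0 : ℝ) < #(F n) := Nat.cast_pos.2 (hF.1 n).card_pos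
  have hupper : Tendsto (fun n => 1 + ∑ k ∈ K, (#((F n).image (· * k) ∆ F n) : ℝ) / #(F n))
      atTop (nhds 1) := by
    simpa using tendsto_const_nhds.add (tendsto_finsetSum K fun k _ => hF.2 k)
  refine tendsto_of_tendsto_of_tendsto_of_le_of_le tendsto_const_nhds hupper (fun n => ?_)
    fun n => ?_
  · rw [one_le_div (hcard n)]
    exact_mod_cast card_le_card_mul_right hK
  · rw [← sum_div, one_add_div (hcard n).ne']
    have hmul := Nat.cast_le (α := ℝ).2 (card_mul_le_card_add_sum_card_symmDiff (F n) K)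
    push_cast at hmul
    exact div_le_div_of_nonneg_right hmul (hcard n).le

theorem tendsto_div_card_iInf_of_card_mul_le (hF : IsFolnerSeq F) {φ : Finset G → ℝ}
    (hφ : ∀ A, 0 ≤ φ A) (hφle : ∀ A K, (#K : ℝ) * φ A ≤ #(A * K⁻¹) * φ K) :
    Tendsto (fun n => φ (F n) / #(F n)) atTop
      (nhds (⨅ K : {K : Finset G // K.Nonempty}, φ K.1 / #K.1)) := by
  have hbdd : BddBelow (Set.range fun K : {K : Finset G // K.Nonempty} => φ K.1 / #K.1) :=
    ⟨0, by rintro _ ⟨K, rfl⟩; exact div_nonneg (hφ _) (Nat.cast_nonneg _)⟩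
  refine tendsto_order.2 ⟨fun a ha => .of_forall fun n =>
    ha.trans_le (ciInf_le hbdd ⟨F n, hF.1 n⟩), fun b hb => ?_⟩
  have : Nonempty {K : Finset G // K.Nonempty} := ⟨⟨{1}, singleton_nonempty 1⟩⟩
  obtain ⟨⟨K, hK⟩, hKb⟩ := exists_lt_of_ciInf_lt hb
  have hlim : Tendsto (fun n => φ K / #K * ((#(F n * K⁻¹) : ℝ) / #(F n))) atTop
      (nhds (φ K / #K)) := by
    simpa using (hF.tendsto_card_mul_div_card hK.inv).const_mul (φ K / #K)
  filter_upwards [hlim.eventually_lt_const hKb] with n hn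
  refine lt_of_le_of_lt ?_ hn
  have hKpos : (0 : ℝ) < #K := Nat.cast_pos.2 hK.card_pos
  have hFpos : (0 : ℝ) < #(F n) := Nat.cast_pos.2 (hF.1 n).card_pos
  rw [div_mul_div_comm, div_le_div_iff₀ hFpos (mul_pos hKpos hFpos)]
  nlinarith [hφle (F n) K]

end IsFolnerSeq

theorem limit_log_partition_function_eq_inf_general
    {G V : Type*} [Group G]
    [MulAction G V] (Γ : SimpleGraph V)
    -- G acts by graph automorphisms:
    (hact : ∀ (g : G) (u w : V), Γ.Adj (g • u) (g • w) ↔ Γ.Adj u w)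
    (U₀ : Finset V)
    -- λ is a positive G-invariant activity function:
    (lam : V → ℝ) (hpos : ∀ v, 0 < lam v)
    (hinv : ∀ (g : G) (v : V), lam (g • v) = lam v)
    -- any Følner sequence:
    (F : ℕ → Finset G) (hF : IsFolnerSeq F) :
    Tendsto
      (fun n => Real.log (hcZ Γ lam (transl (F n) U₀)) / ((F n).card : ℝ))
      atTop
      (nhds (⨅ F' : {F' : Finset G // F'.Nonempty},
        Real.log (hcZ Γ lam (transl F'.1 U₀)) / ((F'.1).card : ℝ))) :=
  hF.tendsto_div_card_iInf_of_card_mul_le (φ := fun A => Real.log (hcZ Γ lam (transl A U₀)))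
    (fun A => Real.log_nonneg (one_le_hcZ Γ (fun v => (hpos v).le) (A • U₀)))
    (fun A K => card_mul_log_hcZ_smul_le Γ hact hpos hinv A K U₀)

theorem limit_log_partition_function_eq_inf
    {G V : Type*} [Group G] [Countable G] [Countable V]
    [MulAction G V] (Γ : SimpleGraph V)
    -- G acts by graph automorphisms:
    (hact : ∀ (g : G) (u w : V), Γ.Adj (g • u) (g • w) ↔ Γ.Adj u w)
    -- Γ is locally finite (looplessness is built into `SimpleGraph`):
    (hlf : ∀ v : V, (Γ.neighborSet v).Finite)
    -- the action is almost free: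
    (hfree : ∀ v : V, {g : G | g • v = v}.Finite)
    -- G is amenable:
    (hamen : ∃ F : ℕ → Finset G, IsFolnerSeq F)
    -- U₀ is a fundamental domain (this also makes the action almost transitive):
    (U₀ : Finset V) (hU₀ : IsFundDom G U₀)
    -- λ is a positive G-invariant activity function:
    (lam : V → ℝ) (hpos : ∀ v, 0 < lam v)
    (hinv : ∀ (g : G) (v : V), lam (g • v) = lam v)
    -- any Følner sequence:
    (F : ℕ → Finset G) (hF : IsFolnerSeq F) :
    Tendsto
      (fun n => Real.log (hcZ Γ lam (transl (F n) U₀)) / ((F n).card : ℝ))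
      atTop
      (nhds (⨅ F' : {F' : Finset G // F'.Nonempty},
        Real.log (hcZ Γ lam (transl F'.1 U₀)) / ((F'.1).card : ℝ))) :=
  limit_log_partition_function_eq_inf_general Γ hact U₀ lam hpos hinv F hF
end

section
/- Let G be a countable amenable group acting almost freely and almost transitively by graph automorphisms on a countable, loopless, locally finite graph Γ, and let U_0 be a fundamental domain. Then for every Følner sequence {F_n} in G, lim_n |F_n U_0|/|F_n| = ∑_{v∈U_0} |Stab_G(v)|^{-1}, where Stab_G(v) = {g ∈ G : gv = v}. -/
/-!
STATEMENT 3: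
Let `G` be a countable amenable group acting almost freely and almost
transitively by graph automorphisms on a countable, loopless, locally finite
graph `Γ`, and let `U₀` be a fundamental domain.  Then for every Følner
sequence `{Fₙ}` in `G`, `limₙ |Fₙ U₀|/|Fₙ| = ∑_{v ∈ U₀} |Stab_G(v)|⁻¹`,
where `Stab_G(v) = {g ∈ G : g v = v}`.
-/

open scoped Classical symmDiff
open Filter

/-!
The orbit map `g ↦ g • u` has the left cosets `g S` of the finite stabilizer `S` of `u` as fibres.
Hence `|S| · |F • u|` is at least `|F|`, and exceeds it at most by `|S|` times the number of
`g ∈ F` whose coset `g S` leaves `F`; such a `g` lies in `F s⁻¹ △ F` for some `s ∈ S`, so along a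
Følner sequence they form a vanishing proportion of `F`. Distinct points of a fundamental domain
lie in distinct orbits, so `F • U₀` is the disjoint union of the sets `F • u` for `u ∈ U₀`.
-/

open Finset Topology

section OrbitCount

variable {G V : Type*} [Group G] [MulAction G V] {u : V} {S : Finset G}

noncomputable def saturatedPart (F : Finset G) (u : V) : Finset G :=
  {g ∈ F | ∀ g' : G, g' • u = g • u → g' ∈ F}

lemma smul_eq_smul_iff_inv_mul_mem (hS : ∀ g, g ∈ S ↔ g • u = u) {g g' : G} :
    g' • u = g • u ↔ g⁻¹ * g' ∈ S := by
  rw [hS, mul_smul, inv_smul_eq_iff]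

lemma card_le_card_mul_card_image_smul (hS : ∀ g, g ∈ S ↔ g • u = u) (F : Finset G) :
    #F ≤ #S * #(F.image (· • u)) := by
  refine card_le_mul_card_image F _ fun b hb => ?_
  obtain ⟨g₀, -, rfl⟩ := mem_image.mp hb
  calc #{g ∈ F | g • u = g₀ • u}
      ≤ #(S.image (g₀ * ·)) := card_le_card fun g hg =>
        mem_image.mpr ⟨g₀⁻¹ * g, (smul_eq_smul_iff_inv_mul_mem hS).mp (mem_filter.mp hg).2,
          mul_inv_cancel_left g₀ g⟩
    _ ≤ #S := card_image_le

lemma card_mul_card_image_smul_saturatedPart_le (hS : ∀ g, g ∈ S ↔ g • u = u)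
    (F : Finset G) :
    #S * #((saturatedPart F u).image (· • u)) ≤ #(saturatedPart F u) := by
  refine mul_card_image_le_card _ _ fun b hb => ?_
  obtain ⟨g₀, hg₀, rfl⟩ := mem_image.mp hb
  obtain ⟨-, hsat⟩ := mem_filter.mp hg₀
  calc #S = #(S.image (g₀ * ·)) := (card_image_of_injective _ (mul_right_injective g₀)).symm
    _ ≤ #{g ∈ saturatedPart F u | g • u = g₀ • u} := by
      refine card_le_card fun g hg => ?_
      obtain ⟨s, hs, rfl⟩ := mem_image.mp hg
      have hfibre : (g₀ * s) • u = g₀ • u :=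
        (smul_eq_smul_iff_inv_mul_mem hS).mpr (by rwa [inv_mul_cancel_left])
      refine mem_filter.mpr ⟨mem_filter.mpr ⟨hsat _ hfibre, fun g' hg' => ?_⟩, hfibre⟩
      exact hsat g' (hg'.trans hfibre)

lemma card_sdiff_saturatedPart_le (hS : ∀ g, g ∈ S ↔ g • u = u) (F : Finset G) :
    #(F \ saturatedPart F u) ≤ ∑ s ∈ S, #(F.image (· * s⁻¹) ∆ F) := by
  refine (card_le_card fun g hg => ?_).trans card_biUnion_le
  rw [Finset.mem_sdiff] at hg
  simp only [saturatedPart, mem_filter, not_and, not_forall] at hg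
  obtain ⟨hgF, hout⟩ := hg
  obtain ⟨g', hg', hg'F⟩ := hout hgF
  refine mem_biUnion.mpr ⟨g⁻¹ * g', (smul_eq_smul_iff_inv_mul_mem hS).mp hg', ?_⟩
  refine mem_symmDiff.mpr (Or.inr ⟨hgF, fun himg => hg'F ?_⟩)
  obtain ⟨h, hh, hhg⟩ := mem_image.mp himg
  rw [mul_inv_eq_iff_eq_mul, mul_inv_cancel_left] at hhg
  exact hhg ▸ hh

lemma card_mul_card_image_smul_le (hS : ∀ g, g ∈ S ↔ g • u = u) (F : Finset G) :
    #S * #(F.image (· • u)) ≤ #F + #S * ∑ s ∈ S, #(F.image (· * s⁻¹) ∆ F) := by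
  set B := saturatedPart F u
  have hBF : B ⊆ F := filter_subset _ _
  have himage : #(F.image (· • u)) ≤ #(B.image (· • u)) + #(F \ B) :=
    calc #(F.image (· • u)) = #((B.image (· • u)) ∪ (F \ B).image (· • u)) := by
          rw [← image_union, union_sdiff_of_subset hBF]
      _ ≤ #(B.image (· • u)) + #((F \ B).image (· • u)) := card_union_le _ _
      _ ≤ #(B.image (· • u)) + #(F \ B) := Nat.add_le_add_left card_image_le _
  calc #S * #(F.image (· • u)) ≤ #S * #(B.image (· • u)) + #S * #(F \ B) := by
        rw [← mul_add]; exact Nat.mul_le_mul_left _ himage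
    _ ≤ #F + #S * ∑ s ∈ S, #(F.image (· * s⁻¹) ∆ F) :=
        add_le_add ((card_mul_card_image_smul_saturatedPart_le hS F).trans (card_le_card hBF))
          (Nat.mul_le_mul_left _ (card_sdiff_saturatedPart_le hS F))

lemma tendsto_card_image_smul_div_card (hu : {g : G | g • u = u}.Finite) {F : ℕ → Finset G}
    (hF : IsFolnerSeq F) :
    Tendsto (fun n => (#((F n).image (· • u)) : ℝ) / #(F n)) atTop
      (𝓝 (Nat.card {g : G // g • u = u} : ℝ)⁻¹) := by
  set S := hu.toFinset
  have hS : ∀ g, g ∈ S ↔ g • u = u := fun g => hu.mem_toFinset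
  rw [show Nat.card {g : G // g • u = u} = #S from Nat.card_eq_card_finite_toFinset hu]
  have hSpos : (0 : ℝ) < #S := by exact_mod_cast card_pos.mpr ⟨1, (hS 1).mpr (one_smul G u)⟩
  have hFpos : ∀ n, (0 : ℝ) < #(F n) := fun n => by exact_mod_cast card_pos.mpr (hF.1 n)
  have hlower : ∀ n, (#S : ℝ)⁻¹ ≤ #((F n).image (· • u)) / #(F n) := fun n => by
    rw [inv_eq_one_div, div_le_div_iff₀ hSpos (hFpos n), one_mul, mul_comm]
    exact_mod_cast card_le_card_mul_card_image_smul hS (F n)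
  have hupper : ∀ n, (#((F n).image (· • u)) : ℝ) / #(F n) ≤
      (#S : ℝ)⁻¹ + ∑ s ∈ S, (#((F n).image (· * s⁻¹) ∆ F n) : ℝ) / #(F n) := fun n => by
    have h : (#S * #((F n).image (· • u)) : ℝ) ≤
        #(F n) + #S * ∑ s ∈ S, (#((F n).image (· * s⁻¹) ∆ F n) : ℝ) := by
      exact_mod_cast card_mul_card_image_smul_le hS (F n)
    rw [← sum_div, inv_eq_one_div, div_add_div _ _ hSpos.ne' (hFpos n).ne',
      div_le_div_iff₀ (hFpos n) (mul_pos hSpos (hFpos n))]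
    nlinarith [hFpos n]
  have herror : Tendsto (fun n => ∑ s ∈ S, (#((F n).image (· * s⁻¹) ∆ F n) : ℝ) / #(F n))
      atTop (𝓝 0) := by
    simpa using tendsto_finsetSum S fun s _ => hF.2 s⁻¹
  exact tendsto_of_tendsto_of_tendsto_of_le_of_le tendsto_const_nhds
    (by simpa using herror.const_add (#S : ℝ)⁻¹) hlower hupper

end OrbitCount

namespace IsFundDom

variable {G V : Type*} [Group G] [MulAction G V] {U₀ : Finset V}

lemma eq_of_smul_eq (hU₀ : IsFundDom G U₀) {u u' : V} (hu : u ∈ U₀) (hu' : u' ∈ U₀) {g : G}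
    (h : g • u = u') : u = u' := by
  by_contra hne
  have hgen : Generating G (U₀.erase u') := fun v => by
    obtain ⟨g', w, hw, rfl⟩ := hU₀.1 v
    by_cases hwu : w = u'
    · exact ⟨g' * g, u, mem_erase.mpr ⟨hne, hu⟩, by rw [mul_smul, h, hwu]⟩
    · exact ⟨g', w, mem_erase.mpr ⟨hwu, hw⟩, rfl⟩
  rw [← hU₀.2 _ (erase_subset _ _) hgen] at hu'
  exact notMem_erase u' U₀ hu'

lemma card_transl (hU₀ : IsFundDom G U₀) (F : Finset G) :
    #(transl F U₀) = ∑ u ∈ U₀, #(F.image (· • u)) := by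
  have htransl : transl F U₀ = U₀.biUnion fun u => F.image (· • u) := by
    rw [transl, product_eq_biUnion_right, biUnion_image]
    simp_rw [image_image]
    rfl
  rw [htransl, card_biUnion]
  intro u hu u' hu' hne
  refine disjoint_left.mpr fun v hv hv' => hne ?_
  obtain ⟨g, -, rfl⟩ := mem_image.mp hv
  obtain ⟨g', -, hg'⟩ := mem_image.mp hv'
  exact hU₀.eq_of_smul_eq hu hu' (by rw [mul_smul, ← hg', inv_smul_smul] : (g'⁻¹ * g) • u = u')

end IsFundDom

theorem limit_card_translate_eq_sum_inv_stabilizers_general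
    {G V : Type*} [Group G]
    [MulAction G V]
    -- the action is almost free:
    (hfree : ∀ v : V, {g : G | g • v = v}.Finite)
    -- U₀ is a fundamental domain (this also makes the action almost transitive):
    (U₀ : Finset V) (hU₀ : IsFundDom G U₀)
    -- any Følner sequence:
    (F : ℕ → Finset G) (hF : IsFolnerSeq F) :
    Tendsto (fun n => ((transl (F n) U₀).card : ℝ) / ((F n).card : ℝ)) atTop
      (nhds (∑ v ∈ U₀, ((Nat.card {g : G // g • v = v} : ℝ))⁻¹)) := by
  have hsplit : (fun n => ((transl (F n) U₀).card : ℝ) / (F n).card) =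
      fun n => ∑ u ∈ U₀, (#((F n).image (· • u)) : ℝ) / #(F n) := by
    funext n
    rw [hU₀.card_transl, Nat.cast_sum, sum_div]
  rw [hsplit]
  exact tendsto_finsetSum U₀ fun u _ => tendsto_card_image_smul_div_card (hfree u) hF

theorem limit_card_translate_eq_sum_inv_stabilizers
    {G V : Type*} [Group G] [Countable G] [Countable V]
    [MulAction G V] (Γ : SimpleGraph V)
    -- G acts by graph automorphisms:
    (hact : ∀ (g : G) (u w : V), Γ.Adj (g • u) (g • w) ↔ Γ.Adj u w)
    -- Γ is locally finite (looplessness is built into `SimpleGraph`):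
    (hlf : ∀ v : V, (Γ.neighborSet v).Finite)
    -- the action is almost free:
    (hfree : ∀ v : V, {g : G | g • v = v}.Finite)
    -- G is amenable:
    (hamen : ∃ F : ℕ → Finset G, IsFolnerSeq F)
    -- U₀ is a fundamental domain (this also makes the action almost transitive):
    (U₀ : Finset V) (hU₀ : IsFundDom G U₀)
    -- any Følner sequence:
    (F : ℕ → Finset G) (hF : IsFolnerSeq F) :
    Tendsto (fun n => ((transl (F n) U₀).card : ℝ) / ((F n).card : ℝ)) atTop
      (nhds (∑ v ∈ U₀, ((Nat.card {g : G // g • v = v} : ℝ))⁻¹)) :=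
  limit_card_translate_eq_sum_inv_stabilizers_general hfree U₀ hU₀ F hF
end

section
/- Let Γ = (V,E) be a countable, loopless, locally finite graph and λ: V → ℝ_{>0} an activity function. Then every Gibbs measure P for (Γ,λ) is fully supported on X(Γ): for every independent set x ∈ X(Γ) and every finite U ⊆ V, P([x_U]) > 0. -/
/-!
STATEMENT 7:
Let `Γ = (V, E)` be a countable, loopless, locally finite graph and
`λ : V → ℝ_{>0}` an activity function.  Then every Gibbs measure `P` for
`(Γ, λ)` is fully supported on `X(Γ)`: for every independent set `x ∈ X(Γ)`
and every finite `U ⊆ V`, `P([x_U]) > 0`.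
-/

open scoped Classical
open MeasureTheory

section HardcoreGibbs

variable {V : Type*}

/-- `x : V → Bool` is an independent set of `Γ`. -/
def IsIndep (Γ : SimpleGraph V) (x : V → Bool) : Prop :=
  ∀ u w : V, Γ.Adj u w → ¬(x u = true ∧ x w = true)

/-- `X(Γ)`, the space of independent sets of `Γ`, as a subset of `{0,1}^V`. -/
def indepSets (Γ : SimpleGraph V) : Set (V → Bool) := {x | IsIndep Γ x}

/-- The cylinder set `[x_W]` of configurations agreeing with `x` on `W`. -/
def cyl (x : V → Bool) (W : Set V) : Set (V → Bool) := {y | ∀ v ∈ W, y v = x v}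

/-- The configuration equal (as a subset) to `s` on `U` and to `y` off `U`. -/
noncomputable def patch (U s : Finset V) (y : V → Bool) : V → Bool :=
  fun v => if v ∈ U then (if v ∈ s then true else false) else y v

/-- Unnormalized weight, under boundary condition `y`, of the configurations on
`U` that lie in the event `A`: the sum over subsets `s ⊆ U` whose concatenation
with `y` off `U` is an independent set belonging to `A`, of `∏_{v ∈ s} λ(v)`. -/
noncomputable def specWt (Γ : SimpleGraph V) (lam : V → ℝ) (U : Finset V)
    (y : V → Bool) (A : Set (V → Bool)) : ℝ :=
  ∑ s ∈ U.powerset,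
    if patch U s y ∈ indepSets Γ ∧ patch U s y ∈ A then ∏ v ∈ s, lam v else 0

/-- The Gibbs specification element `π^y_U(A)` of the hardcore model. -/
noncomputable def spec (Γ : SimpleGraph V) (lam : V → ℝ) (U : Finset V)
    (y : V → Bool) (A : Set (V → Bool)) : ℝ :=
  specWt Γ lam U y A / specWt Γ lam U y Set.univ

/-- The σ-algebra `𝓑_W` generated by the coordinates in `W`. -/
def coordSigma (W : Set V) : MeasurableSpace (V → Bool) :=
  MeasurableSpace.comap (fun y (v : W) => y (v : V)) inferInstance

/-- `P` is a Gibbs measure for the hardcore model `(Γ, λ)`: a Borel probability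
measure on `X(Γ)` such that for every finite `U`, every `U' ⊆ U` and every
`x ∈ X(Γ)`, the conditional probability of `[x_{U'}]` given `𝓑_{U^c}` is
`P`-a.s. equal to `y ↦ π^y_U([x_{U'}])`. -/
def IsGibbs (Γ : SimpleGraph V) (lam : V → ℝ) (P : Measure (V → Bool)) : Prop :=
  IsProbabilityMeasure P ∧ P (indepSets Γ) = 1 ∧
    ∀ U U' : Finset V, U' ⊆ U → ∀ x ∈ indepSets Γ,
      (P[(cyl x (U' : Set V)).indicator (fun _ => (1 : ℝ)) |
          coordSigma ((U : Set V)ᶜ)])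
        =ᵐ[P] fun y => spec Γ lam U y (cyl x (U' : Set V))

end HardcoreGibbs

/-! Enlarge `U` to a finite `W ⊇ U ∪ N(U)`. For every independent boundary condition `y`, the
configuration that copies `x` on `U`, is empty on `W \ U` and agrees with `y` off `W` is
independent, because the empty collar `W \ U` separates the two halves; hence
`π^y_W([x_U]) > 0`. As `P` is carried by independent sets and `P([x_U])` is the `P`-average of
`y ↦ π^y_W([x_U])`, it is positive. -/

lemma integral_pos_of_ae_pos {α : Type*} [MeasurableSpace α] {μ : Measure α} [NeZero μ]
    {f : α → ℝ} (hfi : Integrable f μ) (hf : ∀ᵐ a ∂μ, 0 < f a) : 0 < ∫ a, f a ∂μ := by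
  rw [integral_pos_iff_support_of_nonneg_ae (hf.mono fun _ ha => ha.le) hfi]
  refine pos_iff_ne_zero.2 fun h0 => ?_
  obtain ⟨a, ha, ha0⟩ := (hf.and (measure_eq_zero_iff_ae_notMem.1 h0)).exists
  exact ha0 ha.ne'

section FullSupport

variable {V : Type*}

lemma measurableSet_cyl (x : V → Bool) {W : Set V} (hW : W.Countable) :
    MeasurableSet (cyl x W) := by
  rw [show cyl x W = ⋂ v ∈ W, {y | y v = x v} by ext; simp [cyl]]
  exact .biInter hW fun v _ => measurableSet_eq_fun (measurable_pi_apply v) measurable_const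

lemma measurableSet_indepSets [Countable V] (Γ : SimpleGraph V) :
    MeasurableSet (indepSets Γ) := by
  simp only [indepSets, IsIndep, Set.ofPred_forall]
  exact .iInter fun u => .iInter fun w => .iInter fun _ =>
    ((measurableSet_eq_fun (measurable_pi_apply u) measurable_const).inter
      (measurableSet_eq_fun (measurable_pi_apply w) measurable_const)).compl

lemma exists_finset_superset_neighborSet (Γ : SimpleGraph V)
    (hlf : ∀ v : V, (Γ.neighborSet v).Finite) (U : Finset V) :
    ∃ W : Finset V, U ⊆ W ∧ ∀ u ∈ U, Γ.neighborSet u ⊆ W := by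
  have hfin : ((U : Set V) ∪ ⋃ u ∈ U, Γ.neighborSet u).Finite :=
    U.finite_toSet.union (U.finite_toSet.biUnion fun u _ => hlf u)
  refine ⟨hfin.toFinset, fun u hu => by simp [hu], fun u hu v hv => ?_⟩
  simpa using Or.inr ⟨u, hu, hv⟩

lemma patch_mem_cyl (x y : V → Bool) {U W : Finset V} (hUW : U ⊆ W) :
    patch W (U.filter fun v => x v = true) y ∈ cyl x (U : Set V) := by
  intro v hv
  cases hxv : x v <;> simp_all [patch, hUW hv]

lemma patch_mem_indepSets (Γ : SimpleGraph V) {x y : V → Bool} (hx : x ∈ indepSets Γ)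
    (hy : y ∈ indepSets Γ) {U W : Finset V} (hN : ∀ u ∈ U, Γ.neighborSet u ⊆ W) :
    patch W (U.filter fun v => x v = true) y ∈ indepSets Γ := by
  have hval : ∀ v, patch W (U.filter fun v => x v = true) y v = true →
      (v ∈ U ∧ x v = true) ∨ (v ∉ W ∧ y v = true) := by
    intro v hv
    by_cases hvW : v ∈ W <;> simp_all [patch]
  intro u w hadj ⟨hu, hw⟩
  rcases hval u hu with ⟨huU, hxu⟩ | ⟨huW, hyu⟩ <;>
    rcases hval w hw with ⟨hwU, hxw⟩ | ⟨hwW, hyw⟩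
  · exact hx u w hadj ⟨hxu, hxw⟩
  · exact hwW (hN u huU hadj)
  · exact huW (hN w hwU hadj.symm)
  · exact hy u w hadj ⟨hyu, hyw⟩

lemma specWt_le_specWt_univ (Γ : SimpleGraph V) {lam : V → ℝ} (hpos : ∀ v, 0 < lam v)
    (U : Finset V) (y : V → Bool) (A : Set (V → Bool)) :
    specWt Γ lam U y A ≤ specWt Γ lam U y Set.univ :=
  Finset.sum_le_sum fun s _ => by
    split_ifs with h h'
    · exact le_rfl
    · exact absurd ⟨h.1, Set.mem_univ _⟩ h'
    · exact Finset.prod_nonneg fun v _ => (hpos v).le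
    · exact le_rfl

lemma specWt_pos (Γ : SimpleGraph V) {lam : V → ℝ} (hpos : ∀ v, 0 < lam v) {U s : Finset V}
    (hs : s ⊆ U) {y : V → Bool} {A : Set (V → Bool)}
    (hsA : patch U s y ∈ indepSets Γ ∧ patch U s y ∈ A) : 0 < specWt Γ lam U y A := by
  rw [specWt, ← Finset.sum_erase_add _ _ (Finset.mem_powerset.2 hs), if_pos hsA]
  exact add_pos_of_nonneg_of_pos
    (Finset.sum_nonneg fun t _ => ite_nonneg (Finset.prod_nonneg fun v _ => (hpos v).le) le_rfl)
    (Finset.prod_pos fun v _ => hpos v)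

lemma spec_pos (Γ : SimpleGraph V) {lam : V → ℝ} (hpos : ∀ v, 0 < lam v) {U s : Finset V}
    (hs : s ⊆ U) {y : V → Bool} {A : Set (V → Bool)}
    (hsA : patch U s y ∈ indepSets Γ ∧ patch U s y ∈ A) : 0 < spec Γ lam U y A := by
  have hnum := specWt_pos Γ hpos hs hsA
  exact div_pos hnum (hnum.trans_le (specWt_le_specWt_univ Γ hpos U y A))

namespace IsGibbs

variable {Γ : SimpleGraph V} {lam : V → ℝ} {P : Measure (V → Bool)}

lemma ae_mem_indepSets [Countable V] (hP : IsGibbs Γ lam P) : ∀ᵐ y ∂P, y ∈ indepSets Γ := by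
  have := hP.1
  exact (mem_ae_iff_prob_eq_one (measurableSet_indepSets Γ)).2 hP.2.1

lemma integral_spec_cyl (hP : IsGibbs Γ lam P) {U U' : Finset V} (hU' : U' ⊆ U) {x : V → Bool}
    (hx : x ∈ indepSets Γ) :
    Integrable (fun y => spec Γ lam U y (cyl x (U' : Set V))) P ∧
      ∫ y, spec Γ lam U y (cyl x (U' : Set V)) ∂P = P.real (cyl x (U' : Set V)) := by
  obtain ⟨_, -, hcond⟩ := hP
  have key := hcond U U' hU' x hx
  have hm : coordSigma ((U : Set V)ᶜ) ≤ (inferInstance : MeasurableSpace (V → Bool)) :=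
    measurable_iff_comap_le.1 <| measurable_pi_lambda _ fun v => measurable_pi_apply _
  refine ⟨integrable_condExp.congr key, ?_⟩
  rw [← integral_congr_ae key, integral_condExp hm]
  exact integral_indicator_one (measurableSet_cyl x U'.countable_toSet)

end IsGibbs

end FullSupport

theorem gibbs_measure_fully_supported
    {V : Type*} [Countable V] (Γ : SimpleGraph V)
    -- Γ is locally finite (looplessness is built into `SimpleGraph`):
    (hlf : ∀ v : V, (Γ.neighborSet v).Finite)
    -- λ is a positive activity function:
    (lam : V → ℝ) (hpos : ∀ v, 0 < lam v)
    -- P is a Gibbs measure for (Γ, λ):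
    (P : Measure (V → Bool)) (hP : IsGibbs Γ lam P) :
    ∀ x ∈ indepSets Γ, ∀ U : Finset V, 0 < P (cyl x (U : Set V)) := by
  intro x hx U
  have := hP.1
  obtain ⟨W, hUW, hN⟩ := exists_finset_superset_neighborSet Γ hlf U
  have hspec_pos : ∀ᵐ y ∂P, 0 < spec Γ lam W y (cyl x (U : Set V)) :=
    hP.ae_mem_indepSets.mono fun y hy => spec_pos Γ hpos
      ((Finset.filter_subset _ U).trans hUW)
      ⟨patch_mem_indepSets Γ hx hy hN, patch_mem_cyl x y hUW⟩
  obtain ⟨hint, hintegral⟩ := hP.integral_spec_cyl hUW hx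
  have hreal : 0 < P.real (cyl x (U : Set V)) := hintegral ▸ integral_pos_of_ae_pos hint hspec_pos
  exact (ENNReal.toReal_pos_iff.1 hreal).1
end

section
/- Let Δ be a positive integer, let Γ be a countable, loopless, locally finite graph with maximum degree at most Δ, and let λ: V(Γ) → ℝ_{>0} satisfy λ_- ≤ λ(v) ≤ λ_+ for all v, with 0 < λ_- ≤ λ_+ < ∞. Set C = min{1,λ_-}/(λ_- + (1+λ_+)^Δ) > 0. Then for every finite U ⊆ V(Γ), every x ∈ X(Γ), and every v ∈ U: π^x_U([x_v]) ≥ C. -/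
open scoped Classical

/-!
Split the configurations on `U` according to whether `v` is occupied. Deleting `v` from an
occupied configuration leaves an independent set, so the occupied weight is at most `λ(v)` times
the vacant weight, which is at least `1` (the empty configuration). Conversely, if `x v = true`,
send a vacant configuration `s` to the occupied configuration `{v} ∪ (s \ N(v))`, which is
independent because `x` is. The fibre over `{v} ∪ r` consists of the sets `r ∪ q` with
`q ⊆ N(v)`, of total weight at most `∏_{u ∈ N(v)} (1 + λ(u)) ≤ (1 + λ₊)^Δ` times `λ(r)`, so the
vacant weight is at most `(1 + λ₊)^Δ / λ(v)` times the occupied weight.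
-/

open Finset

theorem div_add_le_div_add {a b c d : ℝ} (ha : 0 < a) (hc : 0 < c) (hd : 0 ≤ d)
    (h : a * d ≤ b * c) : a / (a + b) ≤ c / (c + d) := by
  have hb : 0 ≤ b := nonneg_of_mul_nonneg_left ((mul_nonneg ha.le hd).trans h) hc
  rw [div_le_div_iff₀ (by positivity) (by positivity)]
  linarith

theorem Finset.sum_powerset_union_of_disjoint {α β : Type*} [DecidableEq α] [AddCommMonoid β]
    {s t : Finset α} (hst : Disjoint s t) (f : Finset α → β) :
    ∑ u ∈ (s ∪ t).powerset, f u = ∑ a ∈ s.powerset, ∑ b ∈ t.powerset, f (a ∪ b) := by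
  induction t using Finset.induction_on generalizing f with
  | empty => simp
  | @insert x t hxt ih =>
    have hst' : Disjoint s t := hst.mono_right (subset_insert x t)
    have hxs : x ∉ s := disjoint_right.1 hst (mem_insert_self x t)
    have hxst : x ∉ s ∪ t := by simp [hxs, hxt]
    simp_rw [union_insert, sum_powerset_insert hxst, sum_powerset_insert hxt, union_insert,
      ih hst', sum_add_distrib]

theorem Finset.prod_one_add_le_pow {ι : Type*} {s : Finset ι} {f : ι → ℝ} {B : ℝ} {n : ℕ}
    (hf : ∀ i ∈ s, 0 ≤ f i) (hfB : ∀ i ∈ s, f i ≤ B) (hB : 0 ≤ B) (hs : s.card ≤ n) :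
    ∏ i ∈ s, (1 + f i) ≤ (1 + B) ^ n :=
  calc ∏ i ∈ s, (1 + f i) ≤ ∏ _i ∈ s, (1 + B) :=
        prod_le_prod (fun i hi => by linarith [hf i hi]) fun i hi => by linarith [hfB i hi]
    _ ≤ (1 + B) ^ n := by
        rw [prod_const]
        exact pow_le_pow_right₀ (by linarith) hs

theorem SimpleGraph.card_filter_adj_le_ncard {V : Type*} (Γ : SimpleGraph V) (v : V)
    (hfin : (Γ.neighborSet v).Finite) (s : Finset V) :
    (s.filter (Γ.Adj v)).card ≤ (Γ.neighborSet v).ncard := by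
  rw [← Set.ncard_coe_finset]
  exact Set.ncard_le_ncard (fun u hu => (mem_filter.1 hu).2) hfin

section Independence

variable {V : Type*} {Γ : SimpleGraph V}

theorem IsIndep.anti {y z : V → Bool} (hyz : y ≤ z) (hz : IsIndep Γ z) : IsIndep Γ y :=
  fun u w hadj h => hz u w hadj ⟨Bool.le_iff_imp.1 (hyz u) h.1, Bool.le_iff_imp.1 (hyz w) h.2⟩

theorem IsIndep.update_true {z : V → Bool} {v : V} (hz : IsIndep Γ z)
    (hnbr : ∀ w, Γ.Adj v w → z w = false) : IsIndep Γ (Function.update z v true) := by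
  intro u w hadj
  rcases eq_or_ne u v with rfl | hu
  · simp [hadj.ne.symm, hnbr w hadj]
  rcases eq_or_ne w v with rfl | hw
  · simp [hu, hnbr u hadj.symm]
  simpa [Function.update_apply, hu, hw] using hz u w hadj

end Independence

section Patch

variable {V : Type*} {Γ : SimpleGraph V} {U s t : Finset V} {y : V → Bool} {v : V}

theorem patch_mono (hst : s ⊆ t) : patch U s y ≤ patch U t y := by
  intro u
  rw [Bool.le_iff_imp]
  by_cases hu : u ∈ U <;> simp [patch, hu]
  exact fun h => hst h

theorem patch_empty_le : patch U ∅ y ≤ y := by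
  intro u
  by_cases hu : u ∈ U <;> simp [patch, hu]

theorem patch_apply_of_mem (hv : v ∈ U) : patch U s y v = decide (v ∈ s) := by
  simp [patch, hv]

theorem patch_insert (hv : v ∈ U) :
    patch U (insert v s) y = Function.update (patch U s y) v true := by
  ext u
  rcases eq_or_ne u v with rfl | hu
  · simp [patch, hv]
  · by_cases huU : u ∈ U <;> simp [patch, hu, huU]

theorem isIndep_patch_insert (hy : IsIndep Γ y) (hv : v ∈ U) (hyv : y v = true)
    (hs : IsIndep Γ (patch U s y)) (hnbr : ∀ w ∈ s, ¬ Γ.Adj v w) :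
    IsIndep Γ (patch U (insert v s) y) := by
  rw [patch_insert hv]
  refine hs.update_true fun w hadj => ?_
  by_cases hw : w ∈ U
  · simpa [patch_apply_of_mem hw] using fun hws => hnbr w hws hadj
  · simpa [patch, hw] using fun hyw => hy v w hadj ⟨hyv, hyw⟩

end Patch

section Weights

variable {V : Type*} {Γ : SimpleGraph V} {lam : V → ℝ} {U r s : Finset V} {y : V → Bool}
  {v : V}

noncomputable def patchWeight (Γ : SimpleGraph V) (lam : V → ℝ) (U : Finset V) (y : V → Bool)
    (s : Finset V) : ℝ :=
  if IsIndep Γ (patch U s y) then ∏ u ∈ s, lam u else 0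

theorem patchWeight_nonneg (hlam : ∀ u, 0 ≤ lam u) : 0 ≤ patchWeight Γ lam U y s := by
  unfold patchWeight
  split_ifs
  exacts [prod_nonneg fun u _ => hlam u, le_rfl]

theorem patchWeight_empty (hy : IsIndep Γ y) : patchWeight Γ lam U y ∅ = 1 := by
  simp [patchWeight, hy.anti patch_empty_le]

theorem patchWeight_union_le (hlam : ∀ u, 0 ≤ lam u) (hrs : Disjoint r s) :
    patchWeight Γ lam U y (r ∪ s) ≤ (∏ u ∈ s, lam u) * patchWeight Γ lam U y r := by
  by_cases hind : IsIndep Γ (patch U (r ∪ s) y)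
  · have hr : IsIndep Γ (patch U r y) := hind.anti (patch_mono subset_union_left)
    simp [patchWeight, hind, hr, prod_union hrs, mul_comm]
  · simp only [patchWeight, if_neg hind]
    exact mul_nonneg (prod_nonneg fun u _ => hlam u) (patchWeight_nonneg hlam)

theorem patchWeight_insert_le (hlam : ∀ u, 0 ≤ lam u) (hvs : v ∉ s) :
    patchWeight Γ lam U y (insert v s) ≤ lam v * patchWeight Γ lam U y s := by
  rw [insert_eq, union_comm]
  simpa using
    patchWeight_union_le (Γ := Γ) (U := U) (y := y) hlam (disjoint_singleton_right.2 hvs)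

theorem patchWeight_insert_eq (hy : IsIndep Γ y) (hv : v ∈ U) (hyv : y v = true) (hvs : v ∉ s)
    (hnbr : ∀ w ∈ s, ¬ Γ.Adj v w) :
    patchWeight Γ lam U y (insert v s) = lam v * patchWeight Γ lam U y s := by
  by_cases hs : IsIndep Γ (patch U s y)
  · simp [patchWeight, hs, isIndep_patch_insert hy hv hyv hs hnbr, prod_insert hvs]
  · have hins : ¬ IsIndep Γ (patch U (insert v s) y) :=
      fun h => hs (h.anti (patch_mono (subset_insert v s)))
    simp [patchWeight, hs, hins]

end Weights

section SingleSite

variable {V : Type*} {Γ : SimpleGraph V} {lam : V → ℝ} {U : Finset V} {y : V → Bool} {v : V}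

noncomputable def vacantWeight (Γ : SimpleGraph V) (lam : V → ℝ) (U : Finset V) (y : V → Bool)
    (v : V) : ℝ :=
  ∑ t ∈ (U.erase v).powerset, patchWeight Γ lam U y t

noncomputable def occupiedWeight (Γ : SimpleGraph V) (lam : V → ℝ) (U : Finset V)
    (y : V → Bool) (v : V) : ℝ :=
  ∑ t ∈ (U.erase v).powerset, patchWeight Γ lam U y (insert v t)

theorem specWt_eq_sum_erase (hv : v ∈ U) (A : Set (V → Bool)) :
    specWt Γ lam U y A =
      ∑ t ∈ (U.erase v).powerset, (if patch U t y ∈ A then patchWeight Γ lam U y t else 0) +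
      ∑ t ∈ (U.erase v).powerset,
        (if patch U (insert v t) y ∈ A then patchWeight Γ lam U y (insert v t) else 0) := by
  rw [specWt, ← sum_powerset_insert (notMem_erase v U), insert_erase hv]
  refine sum_congr rfl fun s _ => ?_
  by_cases hA : patch U s y ∈ A <;> simp [patchWeight, indepSets, hA]

theorem specWt_univ (hv : v ∈ U) :
    specWt Γ lam U y Set.univ = vacantWeight Γ lam U y v + occupiedWeight Γ lam U y v := by
  simp [specWt_eq_sum_erase hv, vacantWeight, occupiedWeight]

theorem patch_apply_eq_false_of_mem_powerset_erase (hv : v ∈ U) {t : Finset V}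
    (ht : t ∈ (U.erase v).powerset) : patch U t y v = false := by
  simpa [patch_apply_of_mem hv] using fun hvt => notMem_erase v U (mem_powerset.1 ht hvt)

theorem specWt_vacant (hv : v ∈ U) :
    specWt Γ lam U y {z | z v = false} = vacantWeight Γ lam U y v := by
  rw [specWt_eq_sum_erase hv, vacantWeight]
  simp +contextual [patch_apply_eq_false_of_mem_powerset_erase hv, patch_apply_of_mem hv]

theorem specWt_occupied (hv : v ∈ U) :
    specWt Γ lam U y {z | z v = true} = occupiedWeight Γ lam U y v := by
  rw [specWt_eq_sum_erase hv, occupiedWeight]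
  simp +contextual [patch_apply_eq_false_of_mem_powerset_erase hv, patch_apply_of_mem hv]


theorem one_le_vacantWeight (hlam : ∀ u, 0 ≤ lam u) (hy : IsIndep Γ y) :
    1 ≤ vacantWeight Γ lam U y v := by
  rw [← patchWeight_empty (lam := lam) (U := U) hy]
  exact single_le_sum (f := patchWeight Γ lam U y) (fun t _ => patchWeight_nonneg hlam)
    (empty_mem_powerset _)

theorem occupiedWeight_le (hlam : ∀ u, 0 ≤ lam u) :
    occupiedWeight Γ lam U y v ≤ lam v * vacantWeight Γ lam U y v := by
  rw [occupiedWeight, vacantWeight, mul_sum]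
  exact sum_le_sum fun t ht =>
    patchWeight_insert_le hlam fun hvt => notMem_erase v U (mem_powerset.1 ht hvt)

theorem le_occupiedWeight (hlam : ∀ u, 0 ≤ lam u) (hy : IsIndep Γ y) (hv : v ∈ U)
    (hyv : y v = true) : lam v ≤ occupiedWeight Γ lam U y v := by
  have h : patchWeight Γ lam U y {v} = lam v := by
    simpa [patchWeight_empty hy] using
      patchWeight_insert_eq (lam := lam) (s := ∅) hy hv hyv (notMem_empty v) (by simp)
  rw [← h]
  exact single_le_sum (f := fun t => patchWeight Γ lam U y (insert v t))
    (fun t _ => patchWeight_nonneg hlam) (empty_mem_powerset _)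

theorem mul_vacantWeight_le (hlam : ∀ u, 0 ≤ lam u) (hy : IsIndep Γ y) (hv : v ∈ U)
    (hyv : y v = true) :
    lam v * vacantWeight Γ lam U y v ≤
      (∏ u ∈ (U.erase v).filter (Γ.Adj v), (1 + lam u)) * occupiedWeight Γ lam U y v := by
  set N := (U.erase v).filter (Γ.Adj v)
  set R := U.erase v \ N
  have hRN : Disjoint R N := sdiff_disjoint
  have hterm : ∀ r ∈ R.powerset, ∀ q ∈ N.powerset,
      lam v * patchWeight Γ lam U y (r ∪ q) ≤
        (∏ u ∈ q, lam u) * patchWeight Γ lam U y (insert v r) := by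
    intro r hr q hq
    have hrR : r ⊆ R := mem_powerset.1 hr
    have hvr : v ∉ r := fun h => notMem_erase v U (mem_sdiff.1 (hrR h)).1
    have hnbr : ∀ w ∈ r, ¬ Γ.Adj v w := fun w hw hadj =>
      (mem_sdiff.1 (hrR hw)).2 (mem_filter.2 ⟨(mem_sdiff.1 (hrR hw)).1, hadj⟩)
    rw [patchWeight_insert_eq hy hv hyv hvr hnbr, mul_left_comm]
    exact mul_le_mul_of_nonneg_left
      (patchWeight_union_le hlam (hRN.mono hrR (mem_powerset.1 hq))) (hlam v)
  calc lam v * vacantWeight Γ lam U y v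
      = ∑ r ∈ R.powerset, ∑ q ∈ N.powerset, lam v * patchWeight Γ lam U y (r ∪ q) := by
        rw [vacantWeight, ← sdiff_union_of_subset (filter_subset (Γ.Adj v) (U.erase v)),
          sum_powerset_union_of_disjoint hRN, mul_sum]
        simp_rw [mul_sum]
    _ ≤ ∑ r ∈ R.powerset, ∑ q ∈ N.powerset,
          (∏ u ∈ q, lam u) * patchWeight Γ lam U y (insert v r) :=
        sum_le_sum fun r hr => sum_le_sum fun q hq => hterm r hr q hq
    _ = (∏ u ∈ N, (1 + lam u)) * ∑ r ∈ R.powerset, patchWeight Γ lam U y (insert v r) := by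
        rw [prod_one_add, mul_sum]
        simp_rw [sum_mul]
    _ ≤ (∏ u ∈ N, (1 + lam u)) * occupiedWeight Γ lam U y v :=
        mul_le_mul_of_nonneg_left
          (sum_le_sum_of_subset_of_nonneg (powerset_mono.2 sdiff_subset)
            fun t _ _ => patchWeight_nonneg hlam)
          (prod_nonneg fun u _ => by linarith [hlam u])

theorem le_spec_vacant (hlam : ∀ u, 0 ≤ lam u) (hy : IsIndep Γ y) (hv : v ∈ U) :
    1 / (1 + lam v) ≤ spec Γ lam U y {z | z v = false} := by
  rw [spec, specWt_vacant hv, specWt_univ hv]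
  exact div_add_le_div_add one_pos (one_pos.trans_le (one_le_vacantWeight hlam hy))
    (sum_nonneg fun t _ => patchWeight_nonneg hlam) (by simpa using occupiedWeight_le hlam)

theorem le_spec_occupied (hlam : ∀ u, 0 ≤ lam u) (hlv : 0 < lam v) (hy : IsIndep Γ y)
    (hv : v ∈ U) (hyv : y v = true) :
    lam v / (lam v + ∏ u ∈ (U.erase v).filter (Γ.Adj v), (1 + lam u)) ≤
      spec Γ lam U y {z | z v = true} := by
  rw [spec, specWt_occupied hv, specWt_univ hv, add_comm (vacantWeight Γ lam U y v)]
  exact div_add_le_div_add hlv (hlv.trans_le (le_occupiedWeight hlam hy hv hyv))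
    (sum_nonneg fun t _ => patchWeight_nonneg hlam) (mul_vacantWeight_le hlam hy hv hyv)

end SingleSite

theorem spec_single_site_lower_bound_general
    {V : Type*} (Γ : SimpleGraph V) (Δ : ℕ) (hΔ : 0 < Δ)
    -- Γ is locally finite with maximum degree at most Δ:
    (hlf : ∀ v : V, (Γ.neighborSet v).Finite)
    (hdeg : ∀ v : V, (Γ.neighborSet v).ncard ≤ Δ)
    -- λ takes values in [λ₋, λ₊]:
    (lam : V → ℝ) (lamMinus lamPlus : ℝ)
    (hm : 0 < lamMinus)
    (hlb : ∀ v, lamMinus ≤ lam v) (hub : ∀ v, lam v ≤ lamPlus) :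
    ∀ (U : Finset V) (x : V → Bool), x ∈ indepSets Γ → ∀ v ∈ U,
      min 1 lamMinus / (lamMinus + (1 + lamPlus) ^ Δ)
        ≤ spec Γ lam U x {y | y v = x v} := by
  intro U x hx v hv
  have hlam : ∀ u, 0 < lam u := fun u => hm.trans_le (hlb u)
  have hlamPlus : 0 ≤ lamPlus := (hlam v).le.trans (hub v)
  cases hxv : x v
  · have hpow : 1 + lamPlus ≤ (1 + lamPlus) ^ Δ := le_self_pow₀ (by linarith) hΔ.ne'
    calc min 1 lamMinus / (lamMinus + (1 + lamPlus) ^ Δ) ≤ 1 / (1 + lamPlus) :=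
          div_le_div₀ zero_le_one (min_le_left _ _) (by linarith) (by linarith)
      _ ≤ 1 / (1 + lam v) := one_div_le_one_div_of_le (by linarith [hlam v]) (by linarith [hub v])
      _ ≤ _ := le_spec_vacant (fun u => (hlam u).le) hx hv
  · set P := ∏ u ∈ (U.erase v).filter (Γ.Adj v), (1 + lam u)
    have hP0 : 0 ≤ P := prod_nonneg fun u _ => by linarith [hlam u]
    have hP : P ≤ (1 + lamPlus) ^ Δ :=
      prod_one_add_le_pow (fun u _ => (hlam u).le) (fun u _ => hub u) hlamPlus
        ((Γ.card_filter_adj_le_ncard v (hlf v) _).trans (hdeg v))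
    calc min 1 lamMinus / (lamMinus + (1 + lamPlus) ^ Δ)
        ≤ lamMinus / (lamMinus + (1 + lamPlus) ^ Δ) :=
          div_le_div_of_nonneg_right (min_le_right _ _) (by positivity)
      _ ≤ lam v / (lam v + P) :=
          div_add_le_div_add hm (hlam v) hP0
            ((mul_le_mul (hlb v) hP hP0 (hlam v).le).trans_eq (mul_comm _ _))
      _ ≤ _ := le_spec_occupied (fun u => (hlam u).le) (hlam v) hx hv hxv

theorem spec_single_site_lower_bound
    {V : Type*} [Countable V] (Γ : SimpleGraph V) (Δ : ℕ) (hΔ : 0 < Δ)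
    -- Γ is locally finite with maximum degree at most Δ:
    (hlf : ∀ v : V, (Γ.neighborSet v).Finite)
    (hdeg : ∀ v : V, (Γ.neighborSet v).ncard ≤ Δ)
    -- λ takes values in [λ₋, λ₊]:
    (lam : V → ℝ) (lamMinus lamPlus : ℝ)
    (hm : 0 < lamMinus) (hmp : lamMinus ≤ lamPlus)
    (hlb : ∀ v, lamMinus ≤ lam v) (hub : ∀ v, lam v ≤ lamPlus) :
    ∀ (U : Finset V) (x : V → Bool), x ∈ indepSets Γ → ∀ v ∈ U,
      min 1 lamMinus / (lamMinus + (1 + lamPlus) ^ Δ)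
        ≤ spec Γ lam U x {y | y v = x v} :=
  spec_single_site_lower_bound_general Γ Δ hΔ hlf hdeg lam lamMinus lamPlus hm hlb hub
end
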